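/- arXiv:1808.00731 — 2 statements merged into one kernel-verified Lean document; each statement's English description precedes it below -/
import Mathlib

section
/- Let ξ be an E-optimal design with nonsingular information matrix M(ξ), and let E be a real symmetric positive semidefinite m×m matrix with tr(E) = 1 such that tr(H(x) E) ≤ λ_1(M(ξ)) for all x ∈ X. Then for every E-optimal design ξ* and every x* ∈ X that supports ξ*, one has tr(H(x*) E) = λ_1(M(ξ)). -/
open Matrix BigOperators Finset

/-- An approximate design on a finite design space `X`: nonnegative weights summing to 1. -/
def IsDesign {X : Type*} [Fintype X] (ξ : X → ℝ) : Prop :=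
  (∀ x, 0 ≤ ξ x) ∧ ∑ x, ξ x = 1

/-- The information matrix `M(ξ) = ∑_x ξ(x) H(x)` of a design `ξ`. -/
noncomputable def infoMatrix {X : Type*} [Fintype X] {m : ℕ}
    (H : X → Matrix (Fin m) (Fin m) ℝ) (ξ : X → ℝ) : Matrix (Fin m) (Fin m) ℝ :=
  ∑ x, ξ x • H x

/-- The smallest eigenvalue `λ₁(A)` of a real symmetric matrix `A`, expressed as the minimum
of the Rayleigh quotient `vᵀ A v` over unit vectors `v`. -/
noncomputable def lamMin {m : ℕ} (A : Matrix (Fin m) (Fin m) ℝ) : ℝ :=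
  sInf {r : ℝ | ∃ v : Fin m → ℝ, v ⬝ᵥ v = 1 ∧ r = v ⬝ᵥ (A *ᵥ v)}

/-- A design `ξ` is E-optimal if `λ₁(M(ξ)) ≥ λ₁(M(ξ'))` for every design `ξ'`. -/
def IsEOptimal {X : Type*} [Fintype X] {m : ℕ}
    (H : X → Matrix (Fin m) (Fin m) ℝ) (ξ : X → ℝ) : Prop :=
  IsDesign ξ ∧ ∀ ξ' : X → ℝ, IsDesign ξ' → lamMin (infoMatrix H ξ') ≤ lamMin (infoMatrix H ξ)

lemma psd_quad {m : ℕ} {A : Matrix (Fin m) (Fin m) ℝ} (hA : A.PosSemidef) (v : Fin m → ℝ) :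
    0 ≤ v ⬝ᵥ (A *ᵥ v) := by
  have := hA.dotProduct_mulVec_nonneg v
  simpa using this

lemma psd_smul' {m : ℕ} {A : Matrix (Fin m) (Fin m) ℝ} (hA : A.PosSemidef) {c : ℝ} (hc : 0 ≤ c) :
    (c • A).PosSemidef := by
  refine Matrix.PosSemidef.of_dotProduct_mulVec_nonneg ?_ (fun v => ?_)
  · show (c • A)ᴴ = c • A
    rw [conjTranspose_smul, hA.1.eq, star_trivial]
  · have h0 := hA.dotProduct_mulVec_nonneg v
    have h2 : (star v) ⬝ᵥ ((c • A) *ᵥ v) = c * ((star v) ⬝ᵥ (A *ᵥ v)) := by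
      rw [smul_mulVec, dotProduct_smul, smul_eq_mul]
    rw [h2]
    exact mul_nonneg hc h0

lemma psd_info {X : Type*} [Fintype X] {m : ℕ} (H : X → Matrix (Fin m) (Fin m) ℝ)
    (hH : ∀ x, (H x).PosSemidef) (ξ : X → ℝ) (hξ : ∀ x, 0 ≤ ξ x) :
    (infoMatrix H ξ).PosSemidef := by
  unfold infoMatrix
  induction (Finset.univ : Finset X) using Finset.cons_induction with
  | empty => simpa using Matrix.PosSemidef.zero
  | cons a s ha ih =>
    rw [Finset.sum_cons]
    exact (psd_smul' (hH a) (hξ a)).add ih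

lemma psd_trace_nonneg {m : ℕ} {A : Matrix (Fin m) (Fin m) ℝ} (hA : A.PosSemidef) :
    0 ≤ A.trace := by
  rw [Matrix.trace]
  apply Finset.sum_nonneg
  intro i _
  have h := psd_quad hA (Pi.single i 1)
  simpa [Matrix.mulVec_single, single_dotProduct, Matrix.diag] using h

lemma psd_trace_mul_nonneg {m : ℕ} {A B : Matrix (Fin m) (Fin m) ℝ}
    (hA : A.PosSemidef) (hB : B.PosSemidef) : 0 ≤ (A * B).trace := by
  classical
  open scoped MatrixOrder in
  obtain ⟨S, hS⟩ := CStarAlgebra.nonneg_iff_eq_star_mul_self.mp hB.nonneg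
  have hs : Sᴴ * S = B := by rw [hS, Matrix.star_eq_conjTranspose]
  have h2 : A * B = (A * Sᴴ) * S := by rw [Matrix.mul_assoc, hs]
  rw [h2, Matrix.trace_mul_comm, ← Matrix.mul_assoc]
  have hpsd := hA.mul_mul_conjTranspose_same S
  exact psd_trace_nonneg hpsd

lemma lamMin_le' {m : ℕ} {A : Matrix (Fin m) (Fin m) ℝ} (hA : A.PosSemidef)
    (v : Fin m → ℝ) (hv : v ⬝ᵥ v = 1) : lamMin A ≤ v ⬝ᵥ (A *ᵥ v) := by
  apply csInf_le
  · exact ⟨0, fun r ⟨w, hw, hr⟩ => hr ▸ psd_quad hA w⟩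
  · exact ⟨v, hv, rfl⟩

lemma dot_self_nonneg {m : ℕ} (v : Fin m → ℝ) : 0 ≤ v ⬝ᵥ v :=
  Finset.sum_nonneg fun j _ => mul_self_nonneg (v j)

lemma lamMin_rayleigh {m : ℕ} {A : Matrix (Fin m) (Fin m) ℝ} (hA : A.PosSemidef)
    (v : Fin m → ℝ) : lamMin A * (v ⬝ᵥ v) ≤ v ⬝ᵥ (A *ᵥ v) := by
  by_cases hv : v ⬝ᵥ v = 0
  · have hv0 : v = 0 := dotProduct_self_eq_zero.mp hv
    simp [hv0]
  · have hpos : 0 < v ⬝ᵥ v := lt_of_le_of_ne (dot_self_nonneg v) (Ne.symm hv)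
    set c : ℝ := v ⬝ᵥ v with hc
    have hsq : Real.sqrt c * Real.sqrt c = c := Real.mul_self_sqrt hpos.le
    have hsqpos : 0 < Real.sqrt c := Real.sqrt_pos.mpr hpos
    set w : Fin m → ℝ := (Real.sqrt c)⁻¹ • v with hw
    have hw1 : w ⬝ᵥ w = 1 := by
      rw [hw, smul_dotProduct, dotProduct_smul, smul_eq_mul, smul_eq_mul, ← hc,
        ← mul_assoc, ← mul_inv, hsq]
      exact inv_mul_cancel₀ hv
    have hwq : w ⬝ᵥ (A *ᵥ w) = c⁻¹ * (v ⬝ᵥ (A *ᵥ v)) := by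
      rw [hw, smul_dotProduct, Matrix.mulVec_smul, dotProduct_smul, smul_eq_mul, smul_eq_mul,
        ← mul_assoc, ← mul_inv, hsq]
    have := lamMin_le' hA w hw1
    rw [hwq] at this
    have h2 : lamMin A * c ≤ c⁻¹ * (v ⬝ᵥ (A *ᵥ v)) * c := by
      exact mul_le_mul_of_nonneg_right this hpos.le
    calc lamMin A * (v ⬝ᵥ v) = lamMin A * c := rfl
      _ ≤ c⁻¹ * (v ⬝ᵥ (A *ᵥ v)) * c := h2
      _ = v ⬝ᵥ (A *ᵥ v) := by field_simp

lemma psd_sub_lamMin {m : ℕ} {A : Matrix (Fin m) (Fin m) ℝ} (hA : A.PosSemidef) :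
    (A - lamMin A • (1 : Matrix (Fin m) (Fin m) ℝ)).PosSemidef := by
  refine Matrix.PosSemidef.of_dotProduct_mulVec_nonneg ?_ (fun v => ?_)
  · show (A - lamMin A • 1)ᴴ = A - lamMin A • 1
    rw [conjTranspose_sub, conjTranspose_smul, hA.1.eq, conjTranspose_one, star_trivial]
  · have h1 : (star v) ⬝ᵥ ((A - lamMin A • 1) *ᵥ v)
        = v ⬝ᵥ (A *ᵥ v) - lamMin A * (v ⬝ᵥ v) := by
      rw [Matrix.sub_mulVec, dotProduct_sub, smul_mulVec, dotProduct_smul,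
        Matrix.one_mulVec, smul_eq_mul]
      simp
    rw [h1]
    have := lamMin_rayleigh hA v
    simpa using sub_nonneg.mpr this

/-- let `ξ` be E-optimal with nonsingular `M(ξ)` and let `E` be positive
semidefinite with `tr(E) = 1` and `tr(H(x) E) ≤ λ₁(M(ξ))` for all `x ∈ X`. Then for every
E-optimal design `ξ*` and every `x* ∈ X` supporting `ξ*`, `tr(H(x*) E) = λ₁(M(ξ))`. -/
theorem stmt_3 {X : Type*} [Fintype X] [Nonempty X] {m : ℕ} (hm : 1 ≤ m)
    (H : X → Matrix (Fin m) (Fin m) ℝ) (hH : ∀ x, (H x).PosSemidef)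
    (ξ : X → ℝ) (hopt : IsEOptimal H ξ) (hns : (infoMatrix H ξ).det ≠ 0)
    (E : Matrix (Fin m) (Fin m) ℝ) (hE : E.PosSemidef) (hEtr : E.trace = 1)
    (hEle : ∀ x, (H x * E).trace ≤ lamMin (infoMatrix H ξ)) :
    ∀ ξstar : X → ℝ, IsEOptimal H ξstar →
      ∀ xstar : X, 0 < ξstar xstar →
        (H xstar * E).trace = lamMin (infoMatrix H ξ) := by
  intro ξstar hstar xstar hxstar
  set lam : ℝ := lamMin (infoMatrix H ξ) with hlam
  set M : Matrix (Fin m) (Fin m) ℝ := infoMatrix H ξstar with hM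
  -- equality of the two optimal values
  have hlameq : lamMin M = lam := le_antisymm (hopt.2 ξstar hstar.1) (hstar.2 ξ hopt.1)
  have hMpsd : M.PosSemidef := psd_info H hH ξstar hstar.1.1
  -- trace (M * E) ≥ lam
  have hsub : (M - lam • (1 : Matrix (Fin m) (Fin m) ℝ)).PosSemidef := by
    have := psd_sub_lamMin hMpsd
    rwa [hlameq] at this
  have htr1 : 0 ≤ ((M - lam • 1) * E).trace := psd_trace_mul_nonneg hsub hE
  have htr2 : ((M - lam • 1) * E).trace = (M * E).trace - lam := by
    rw [Matrix.sub_mul, Matrix.smul_mul, Matrix.one_mul, trace_sub, trace_smul, hEtr]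
    simp
  have hge : lam ≤ (M * E).trace := by linarith [htr1, htr2 ▸ htr1]
  -- trace (M * E) = ∑ ξstar x * trace (H x * E)
  have hexp : (M * E).trace = ∑ x, ξstar x * (H x * E).trace := by
    rw [hM]
    unfold infoMatrix
    rw [Finset.sum_mul, trace_sum]
    congr 1
    funext x
    rw [Matrix.smul_mul, trace_smul, smul_eq_mul]
  -- termwise bound
  have hbound : ∀ x ∈ Finset.univ (α := X), ξstar x * (H x * E).trace ≤ ξstar x * lam :=
    fun x _ => mul_le_mul_of_nonneg_left (hEle x) (hstar.1.1 x)
  have hsumlam : ∑ x, ξstar x * lam = lam := by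
    rw [← Finset.sum_mul, hstar.1.2, one_mul]
  have hsumeq : ∑ x, ξstar x * (H x * E).trace = ∑ x, ξstar x * lam := by
    have hle : ∑ x, ξstar x * (H x * E).trace ≤ ∑ x, ξstar x * lam :=
      Finset.sum_le_sum hbound
    have hge' : lam ≤ ∑ x, ξstar x * (H x * E).trace := hexp ▸ hge
    rw [hsumlam]
    linarith
  have hterm := (Finset.sum_eq_sum_iff_of_le hbound).mp hsumeq xstar (Finset.mem_univ xstar)
  exact mul_left_cancel₀ (ne_of_gt hxstar) hterm
end

section
/- Let ξ be an approximate design with nonsingular information matrix M and let λ_1 = λ_1(M). Let v_1, …, v_s be unit-norm eigenvectors of M, let α_1, …, α_s ≥ 0 with Σ_i α_i = 1, set Z = Σ_{i=1}^s α_i v_i v_iᵀ and h = max_{x ∈ X} tr(H(x) Z). If h = λ_1, then ξ is E-optimal. -/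
open Matrix BigOperators Finset

lemma rayleigh_bddBelow {m : ℕ} (A : Matrix (Fin m) (Fin m) ℝ) :
    BddBelow {r : ℝ | ∃ v : Fin m → ℝ, v ⬝ᵥ v = 1 ∧ r = v ⬝ᵥ (A *ᵥ v)} := by
  refine ⟨-(∑ i, ∑ j, |A i j|), ?_⟩
  rintro r ⟨v, hv, rfl⟩
  have hvabs : ∀ i, |v i| ≤ 1 := by
    intro i
    have h1 : (v i) ^ 2 ≤ 1 := by
      calc (v i) ^ 2 ≤ ∑ j, (v j) ^ 2 := by
            exact Finset.single_le_sum (fun j _ => sq_nonneg (v j)) (Finset.mem_univ i)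
        _ = 1 := by simpa [dotProduct, sq] using hv
    nlinarith [abs_nonneg (v i), sq_abs (v i)]
  have hexp : v ⬝ᵥ (A *ᵥ v) = ∑ i, ∑ j, v i * (A i j * v j) := by
    simp [dotProduct, mulVec, Finset.mul_sum]
  have habs : |v ⬝ᵥ (A *ᵥ v)| ≤ ∑ i, ∑ j, |A i j| := by
    rw [hexp]
    calc |∑ i, ∑ j, v i * (A i j * v j)| ≤ ∑ i, ∑ j, |v i * (A i j * v j)| := by
          refine (Finset.abs_sum_le_sum_abs _ _).trans ?_
          exact Finset.sum_le_sum fun i _ => Finset.abs_sum_le_sum_abs _ _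
      _ ≤ ∑ i, ∑ j, |A i j| := by
          refine Finset.sum_le_sum fun i _ => Finset.sum_le_sum fun j _ => ?_
          rw [abs_mul, abs_mul]
          calc |v i| * (|A i j| * |v j|) ≤ 1 * (|A i j| * 1) := by
                apply mul_le_mul (hvabs i) ?_ (by positivity) zero_le_one
                exact mul_le_mul_of_nonneg_left (hvabs j) (abs_nonneg _)
            _ = |A i j| := by ring
  linarith [neg_abs_le (v ⬝ᵥ (A *ᵥ v))]

lemma trace_mul_vecMulVec {m : ℕ} (B : Matrix (Fin m) (Fin m) ℝ) (u : Fin m → ℝ) :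
    (B * vecMulVec u u).trace = u ⬝ᵥ (B *ᵥ u) := by
  simp only [Matrix.trace, Matrix.diag, Matrix.mul_apply, vecMulVec_apply, dotProduct,
    mulVec, Finset.mul_sum]
  congr 1; ext i; congr 1; ext j; ring

/-- in the setting of Theorem 1 (with `Z = ∑ αᵢ vᵢ vᵢᵀ` built from unit-norm
eigenvectors of the nonsingular `M = M(ξ)` and `h = max_{x ∈ X} tr(H(x) Z)`), if `h = λ₁(M)`
then `ξ` is E-optimal. -/
theorem stmt_5 {X : Type*} [Fintype X] [Nonempty X] {m : ℕ} (hm : 1 ≤ m)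
    (H : X → Matrix (Fin m) (Fin m) ℝ) (hH : ∀ x, (H x).PosSemidef)
    (ξ : X → ℝ) (hξ : IsDesign ξ) (hns : (infoMatrix H ξ).det ≠ 0)
    (s : ℕ) (v : Fin s → (Fin m → ℝ))
    (hvnorm : ∀ i, v i ⬝ᵥ v i = 1)
    (hveig : ∀ i, ∃ μ : ℝ, (infoMatrix H ξ) *ᵥ v i = μ • v i)
    (α : Fin s → ℝ) (hα : ∀ i, 0 ≤ α i) (hαsum : ∑ i, α i = 1)
    (Z : Matrix (Fin m) (Fin m) ℝ) (hZ : Z = ∑ i, α i • vecMulVec (v i) (v i))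
    (h : ℝ) (hh : h = Finset.univ.sup' Finset.univ_nonempty (fun x => (H x * Z).trace))
    (heq : h = lamMin (infoMatrix H ξ)) :
    IsEOptimal H ξ := by
  refine ⟨hξ, fun ξ' hξ' => ?_⟩
  set A := infoMatrix H ξ' with hA
  set L := lamMin A with hLdef
  have hL : ∀ i, L ≤ v i ⬝ᵥ (A *ᵥ v i) := fun i =>
    csInf_le (rayleigh_bddBelow A) ⟨v i, hvnorm i, rfl⟩
  have hZtr : (A * Z).trace = ∑ i, α i * (v i ⬝ᵥ (A *ᵥ v i)) := by
    rw [hZ]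
    simp [Matrix.mul_sum, Matrix.mul_smul, Matrix.trace_sum, Matrix.trace_smul,
      trace_mul_vecMulVec, smul_eq_mul]
  have h1 : L ≤ (A * Z).trace := by
    rw [hZtr]
    calc L = ∑ i, α i * L := by rw [← Finset.sum_mul, hαsum, one_mul]
      _ ≤ ∑ i, α i * (v i ⬝ᵥ (A *ᵥ v i)) :=
        Finset.sum_le_sum fun i _ => mul_le_mul_of_nonneg_left (hL i) (hα i)
  have h2 : (A * Z).trace ≤ h := by
    have hexp : (A * Z).trace = ∑ x, ξ' x * (H x * Z).trace := by
      rw [hA, infoMatrix]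
      simp [Finset.sum_mul, Matrix.smul_mul, Matrix.trace_sum, Matrix.trace_smul, smul_eq_mul]
    rw [hexp]
    calc ∑ x, ξ' x * (H x * Z).trace ≤ ∑ x, ξ' x * h := by
          refine Finset.sum_le_sum fun x _ => mul_le_mul_of_nonneg_left ?_ (hξ'.1 x)
          rw [hh]
          exact Finset.le_sup' (fun x => (H x * Z).trace) (Finset.mem_univ x)
      _ = h := by rw [← Finset.sum_mul, hξ'.2, one_mul]
  calc L ≤ h := h1.trans h2
    _ = lamMin (infoMatrix H ξ) := heq
end
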